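/- Discrete maximum principle: let Ψ be a vector mesh function on the grid {x_j}_{j=0}^N × {t_k}_{k=0}^M. If Ψ ≥ 0 (componentwise) at all mesh points on Γ (i.e. where j = 0, j = N or k = 0) and (L^{M,N}Ψ)(x_j,t_k) ≥ 0 (componentwise) at all interior mesh points (0 < j < N, 0 < k ≤ M), then Ψ ≥ 0 at every mesh point. -/
import Mathlib


/-- The discrete operator `L^{M,N}` applied to the vector mesh function `Ψ`
(component `i`, space index `j`, time index `k`), on an arbitrary mesh
`x : ℕ → ℝ`, `t : ℕ → ℝ`:
`L^{M,N}Ψ = D_t⁻ Ψ − ε_i δ_x² Ψ + Σ_l a_il Ψ_l`. -/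
noncomputable def discreteL (n : ℕ) (ε : ℕ → ℝ) (A : ℕ → ℕ → ℝ → ℝ → ℝ)
    (x t : ℕ → ℝ) (Ψ : ℕ → ℕ → ℕ → ℝ) (i j k : ℕ) : ℝ :=
  (Ψ i j k - Ψ i j (k - 1)) / (t k - t (k - 1))
    - ε i * (((Ψ i (j + 1) k - Ψ i j k) / (x (j + 1) - x j)
          - (Ψ i j k - Ψ i (j - 1) k) / (x j - x (j - 1)))
        / ((x (j + 1) - x (j - 1)) / 2))
    + ∑ l ∈ Finset.Icc 1 n, A i l (x j) (t k) * Ψ l j k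

/-- **Discrete maximum principle** (Lemma 9 of the paper): if the vector mesh
function `Ψ` is componentwise nonnegative at the boundary mesh points
(`j = 0`, `j = N` or `k = 0`) and `L^{M,N}Ψ ≥ 0` componentwise at all
interior mesh points (`0 < j < N`, `0 < k ≤ M`), then `Ψ ≥ 0` at every mesh
point. -/
theorem stmt_15
    (n : ℕ) (hn : 1 ≤ n) (T : ℝ) (hT : 0 < T)
    (ε : ℕ → ℝ)
    (hε0 : ∀ i ∈ Finset.Icc 1 n, 0 < ε i)
    (hε1 : ∀ i ∈ Finset.Icc 1 n, ε i ≤ 1)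
    (hεmono : ∀ i j : ℕ, 1 ≤ i → i < j → j ≤ n → ε i < ε j)
    (N M : ℕ) (hN : 1 ≤ N) (hM : 1 ≤ M)
    (x : ℕ → ℝ) (hx0 : x 0 = 0) (hxN : x N = 1)
    (hxmono : ∀ j j' : ℕ, j < j' → j' ≤ N → x j < x j')
    (t : ℕ → ℝ) (ht0 : t 0 = 0) (htM : t M = T)
    (htmono : ∀ k k' : ℕ, k < k' → k' ≤ M → t k < t k')
    (A : ℕ → ℕ → ℝ → ℝ → ℝ)
    (hAdiag : ∀ i ∈ Finset.Icc 1 n, ∀ j ≤ N, ∀ k ≤ M,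
      ∑ l ∈ (Finset.Icc 1 n).erase i, |A i l (x j) (t k)| < A i i (x j) (t k))
    (hAoff : ∀ i ∈ Finset.Icc 1 n, ∀ l ∈ Finset.Icc 1 n, i ≠ l →
      ∀ j ≤ N, ∀ k ≤ M, A i l (x j) (t k) ≤ 0)
    (Ψ : ℕ → ℕ → ℕ → ℝ)
    (hΓ : ∀ i ∈ Finset.Icc 1 n, ∀ j ≤ N, ∀ k ≤ M,
      (j = 0 ∨ j = N ∨ k = 0) → 0 ≤ Ψ i j k)
    (hL : ∀ i ∈ Finset.Icc 1 n, ∀ j k : ℕ, 0 < j → j < N → 0 < k → k ≤ M →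
      0 ≤ discreteL n ε A x t Ψ i j k) :
    ∀ i ∈ Finset.Icc 1 n, ∀ j ≤ N, ∀ k ≤ M, 0 ≤ Ψ i j k := by
  by_contra hcon
  push_neg at hcon
  obtain ⟨i0, hi0, j0, hj0, k0, hk0, hneg⟩ := hcon
  set S : Finset (ℕ × ℕ × ℕ) :=
    (Finset.Icc 1 n) ×ˢ (Finset.Icc 0 N) ×ˢ (Finset.Icc 0 M) with hS
  have hp0 : (i0, j0, k0) ∈ S := by
    simp only [hS, Finset.mem_product, Finset.mem_Icc]
    exact ⟨Finset.mem_Icc.1 hi0, ⟨Nat.zero_le _, hj0⟩, ⟨Nat.zero_le _, hk0⟩⟩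
  obtain ⟨p, hpS, hpmin⟩ :=
    S.exists_min_image (fun p => Ψ p.1 p.2.1 p.2.2) ⟨(i0, j0, k0), hp0⟩
  obtain ⟨i, j, k⟩ := p
  have hmem : (1 ≤ i ∧ i ≤ n) ∧ (0 ≤ j ∧ j ≤ N) ∧ (0 ≤ k ∧ k ≤ M) := by
    simpa only [hS, Finset.mem_product, Finset.mem_Icc] using hpS
  have hi : i ∈ Finset.Icc 1 n := Finset.mem_Icc.2 hmem.1
  have hjN : j ≤ N := hmem.2.1.2
  have hkM : k ≤ M := hmem.2.2.2
  set m := Ψ i j k with hm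
  have hmneg : m < 0 := lt_of_le_of_lt (hpmin _ hp0) hneg
  have hmin : ∀ i' ∈ Finset.Icc 1 n, ∀ j' ≤ N, ∀ k' ≤ M, m ≤ Ψ i' j' k' := by
    intro i' hi' j' hj' k' hk'
    refine hpmin (i', j', k') ?_
    simp only [hS, Finset.mem_product, Finset.mem_Icc]
    exact ⟨Finset.mem_Icc.1 hi', ⟨Nat.zero_le _, hj'⟩, ⟨Nat.zero_le _, hk'⟩⟩
  have hbd : ¬ (j = 0 ∨ j = N ∨ k = 0) := fun h =>
    absurd (hΓ i hi j hjN k hkM h) (not_le.2 hmneg)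
  push_neg at hbd
  obtain ⟨hj0', hjN', hk0'⟩ := hbd
  have hjpos : 0 < j := Nat.pos_of_ne_zero hj0'
  have hjlt : j < N := lt_of_le_of_ne hjN hjN'
  have hkpos : 0 < k := Nat.pos_of_ne_zero hk0'
  have hL0 := hL i hi j k hjpos hjlt hkpos hkM
  -- positivity of mesh steps
  have hdt : 0 < t k - t (k - 1) :=
    sub_pos.2 (htmono _ _ (Nat.sub_lt hkpos one_pos) hkM)
  have hxp : 0 < x (j + 1) - x j :=
    sub_pos.2 (hxmono _ _ (Nat.lt_succ_self j) (by omega))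
  have hxm : 0 < x j - x (j - 1) :=
    sub_pos.2 (hxmono _ _ (Nat.sub_lt hjpos one_pos) hjN)
  have hxw : 0 < (x (j + 1) - x (j - 1)) / 2 := by
    have : x (j - 1) < x (j + 1) := hxmono _ _ (by omega) (by omega)
    linarith
  -- neighbors are ≥ m
  have hΨk : m ≤ Ψ i j (k - 1) := hmin i hi j hjN (k - 1) (by omega)
  have hΨp : m ≤ Ψ i (j + 1) k := hmin i hi (j + 1) (by omega) k hkM
  have hΨm : m ≤ Ψ i (j - 1) k := hmin i hi (j - 1) (by omega) k hkM
  -- time-difference term is nonpositive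
  have hDt : (Ψ i j k - Ψ i j (k - 1)) / (t k - t (k - 1)) ≤ 0 := by
    apply div_nonpos_of_nonpos_of_nonneg
    · rw [← hm]; linarith
    · exact hdt.le
  -- diffusion term is nonnegative
  have hεδ : 0 ≤ ε i * (((Ψ i (j + 1) k - Ψ i j k) / (x (j + 1) - x j)
          - (Ψ i j k - Ψ i (j - 1) k) / (x j - x (j - 1)))
        / ((x (j + 1) - x (j - 1)) / 2)) := by
    have hDp : 0 ≤ (Ψ i (j + 1) k - Ψ i j k) / (x (j + 1) - x j) :=
      div_nonneg (by rw [← hm]; linarith) hxp.le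
    have hDm : (Ψ i j k - Ψ i (j - 1) k) / (x j - x (j - 1)) ≤ 0 := by
      apply div_nonpos_of_nonpos_of_nonneg
      · rw [← hm]; linarith
      · exact hxm.le
    exact mul_nonneg (hε0 i hi).le (div_nonneg (by linarith) hxw.le)
  -- reaction term is negative
  have hsum : ∑ l ∈ Finset.Icc 1 n, A i l (x j) (t k) * Ψ l j k < 0 := by
    have h1 : ∀ l ∈ (Finset.Icc 1 n).erase i,
        A i l (x j) (t k) * Ψ l j k ≤ A i l (x j) (t k) * m := by
      intro l hl
      have hl' := Finset.mem_of_mem_erase hl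
      have hne : i ≠ l := (Finset.ne_of_mem_erase hl).symm
      exact mul_le_mul_of_nonpos_left (hmin l hl' j hjN k hkM)
        (hAoff i hi l hl' hne j hjN k hkM)
    have h2 : ∑ l ∈ (Finset.Icc 1 n).erase i, A i l (x j) (t k) * Ψ l j k
        ≤ ∑ l ∈ (Finset.Icc 1 n).erase i, A i l (x j) (t k) * m :=
      Finset.sum_le_sum h1
    have h3 : ∑ l ∈ (Finset.Icc 1 n).erase i, A i l (x j) (t k) * m
        = (∑ l ∈ (Finset.Icc 1 n).erase i, A i l (x j) (t k)) * m :=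
      (Finset.sum_mul _ _ _).symm
    have h4 : ∑ l ∈ (Finset.Icc 1 n).erase i, A i l (x j) (t k)
        = - ∑ l ∈ (Finset.Icc 1 n).erase i, |A i l (x j) (t k)| := by
      rw [← Finset.sum_neg_distrib]
      refine Finset.sum_congr rfl fun l hl => ?_
      rw [abs_of_nonpos (hAoff i hi l (Finset.mem_of_mem_erase hl)
        ((Finset.ne_of_mem_erase hl).symm) j hjN k hkM), neg_neg]
    have hrow := hAdiag i hi j hjN k hkM
    have hsplit : A i i (x j) (t k) * Ψ i j k
        + ∑ l ∈ (Finset.Icc 1 n).erase i, A i l (x j) (t k) * Ψ l j k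
        = ∑ l ∈ Finset.Icc 1 n, A i l (x j) (t k) * Ψ l j k :=
      Finset.add_sum_erase _ (fun l => A i l (x j) (t k) * Ψ l j k) hi
    have hfin : ∑ l ∈ Finset.Icc 1 n, A i l (x j) (t k) * Ψ l j k
        ≤ (A i i (x j) (t k)
            - ∑ l ∈ (Finset.Icc 1 n).erase i, |A i l (x j) (t k)|) * m := by
      rw [← hsplit, ← hm]
      rw [h4] at h3
      nlinarith [h2, h3]
    refine lt_of_le_of_lt hfin (mul_neg_of_pos_of_neg (by linarith) hmneg)
  rw [discreteL] at hL0
  linarith
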